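/- arXiv:2110.10970 — 2 statements merged into one kernel-verified Lean document; each statement's English description precedes it below -/
import Mathlib

section
/- A morphism f : (A, μ_A) → (B, μ_B) in Fuz(H) is a strong monomorphism if and only if f is injective and μ_B(f(x)) = μ_A(x) for all x ∈ A. -/
open CategoryTheory

universe u

/-- An `H`-fuzzy set: a set together with a membership function into the frame `H`. -/
structure FuzzySet (H : Type u) [Order.Frame H] : Type (u + 1) where
  carrier : Type u
  μ : carrier → H

/-- A morphism of fuzzy sets: a function that does not decrease membership degrees. -/
structure FuzzyHom {H : Type u} [Order.Frame H] (A B : FuzzySet H) : Type u where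
  toFun : A.carrier → B.carrier
  le_mem : ∀ x, A.μ x ≤ B.μ (toFun x)

/-- The category `Fuz(H)` of `H`-fuzzy sets. -/
instance fuzCat {H : Type u} [Order.Frame H] : Category.{u} (FuzzySet H) where
  Hom A B := FuzzyHom A B
  id _ := ⟨_root_.id, fun _ => le_rfl⟩
  comp f g := ⟨g.toFun ∘ f.toFun, fun x => (f.le_mem x).trans (g.le_mem _)⟩
  id_comp _ := rfl
  comp_id _ := rfl
  assoc _ _ _ := rfl

/-- An arrow `m` has the (unique) left lifting property with respect to an arrow `e`:
for every commuting square `u ≫ m = e ≫ v` there is a unique diagonal `k` with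
`k ≫ m = v`.  A strong monomorphism is an arrow having this property with respect to
all epimorphisms. -/
def IsStrongMonoLLP {C : Type*} [Category C] {X Y : C} (m : X ⟶ Y) : Prop :=
  ∀ ⦃A B : C⦄ (e : A ⟶ B), Epi e → ∀ (u : A ⟶ X) (v : B ⟶ Y),
    u ≫ m = e ≫ v → ∃! k : B ⟶ X, k ≫ m = v


section Aux

variable {H : Type u} [Order.Frame H]

lemma FuzzyHom.ext' {A B : FuzzySet H} {f g : A ⟶ B}
    (h : FuzzyHom.toFun f = FuzzyHom.toFun g) : f = g := by
  have hf : ∀ (f g : FuzzyHom A B), f.toFun = g.toFun → f = g := by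
    intro f g h; cases f; cases g; cases h; rfl
  exact hf f g h

lemma fuzzy_comp_toFun {A B C : FuzzySet H} (f : A ⟶ B) (g : B ⟶ C) :
    FuzzyHom.toFun (f ≫ g) = g.toFun ∘ f.toFun := rfl

lemma fuzzy_surjective_epi {A B : FuzzySet H} (e : A ⟶ B)
    (hs : Function.Surjective e.toFun) : Epi e := by
  constructor
  intro C g h hgh
  apply FuzzyHom.ext'
  funext b
  obtain ⟨a, rfl⟩ := hs b
  exact congrFun (congrArg FuzzyHom.toFun hgh) a

lemma fuzzy_epi_surjective {A B : FuzzySet H} (e : A ⟶ B) (he : Epi e) :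
    Function.Surjective e.toFun := by
  by_contra hns
  rw [Function.Surjective] at hns
  push_neg at hns
  obtain ⟨b₀, hb₀⟩ := hns
  let C : FuzzySet H := ⟨ULift Prop, fun _ => ⊤⟩
  let g₁ : B ⟶ C := ⟨fun b => ⟨∃ a, e.toFun a = b⟩, fun _ => le_top⟩
  let g₂ : B ⟶ C := ⟨fun _ => ⟨True⟩, fun _ => le_top⟩
  have hcomp : e ≫ g₁ = e ≫ g₂ := by
    apply FuzzyHom.ext'
    funext a
    show (⟨∃ a', e.toFun a' = e.toFun a⟩ : ULift Prop) = ⟨True⟩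
    simp only [ULift.up_inj, eq_iff_iff, iff_true]
    exact ⟨a, rfl⟩
  have := he.left_cancellation g₁ g₂ hcomp
  have h2 : (∃ a, e.toFun a = b₀) = True := by
    have := congrFun (congrArg FuzzyHom.toFun this) b₀
    exact congrArg ULift.down this
  obtain ⟨a, ha⟩ := h2 ▸ trivial
  exact hb₀ a ha

end Aux

/-- A morphism `f : (A, μ_A) → (B, μ_B)` in `Fuz(H)` is a strong monomorphism iff it
is injective and `μ_B (f x) = μ_A x` for all `x`. -/
theorem fuzzy_strongMono_iff {H : Type u} [Order.Frame H] {A B : FuzzySet H} (f : A ⟶ B) :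
    IsStrongMonoLLP f ↔
      (Function.Injective (FuzzyHom.toFun f) ∧
        ∀ x, B.μ (FuzzyHom.toFun f x) = A.μ x) := by
  constructor
  · intro hllp
    -- First: injectivity, via a two-point set with bottom membership.
    have hinj : Function.Injective (FuzzyHom.toFun f) := by
      intro x y hxy
      let P2 : FuzzySet H := ⟨ULift Bool, fun _ => ⊥⟩
      let P1 : FuzzySet H := ⟨PUnit, fun _ => ⊥⟩
      let e : P2 ⟶ P1 := ⟨fun _ => PUnit.unit, fun _ => le_rfl⟩
      have he : Epi e := fuzzy_surjective_epi e (fun p => ⟨⟨true⟩, rfl⟩)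
      let u : P2 ⟶ A := ⟨fun b => if b.down then x else y, fun _ => bot_le⟩
      let v : P1 ⟶ B := ⟨fun _ => f.toFun x, fun _ => bot_le⟩
      have hsq : u ≫ f = e ≫ v := by
        apply FuzzyHom.ext'
        funext b
        show f.toFun (if b.down then x else y) = f.toFun x
        cases hb : b.down <;> simp [hb, hxy]
      obtain ⟨k, hk, huniq⟩ := hllp e he u v hsq
      let k₁ : P1 ⟶ A := ⟨fun _ => x, fun _ => bot_le⟩
      let k₂ : P1 ⟶ A := ⟨fun _ => y, fun _ => bot_le⟩
      have h1 : k₁ = k₂ := by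
        rw [huniq k₁ (FuzzyHom.ext' rfl),
            huniq k₂ (FuzzyHom.ext' (funext fun _ => hxy.symm))]
      exact congrFun (congrArg FuzzyHom.toFun h1) PUnit.unit
    refine ⟨hinj, fun x => ?_⟩
    -- Second: membership equality, via the identity-carrier epi.
    · let A' : FuzzySet H := ⟨A.carrier, fun a => B.μ (f.toFun a)⟩
      let e : A ⟶ A' := ⟨_root_.id, fun a => f.le_mem a⟩
      have he : Epi e := fuzzy_surjective_epi e (fun a => ⟨a, rfl⟩)
      let u : A ⟶ A := 𝟙 A
      let v : A' ⟶ B := ⟨f.toFun, fun _ => le_rfl⟩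
      have hsq : u ≫ f = e ≫ v := FuzzyHom.ext' rfl
      obtain ⟨k, hk, -⟩ := hllp e he u v hsq
      have hkfun : k.toFun = _root_.id := by
        funext a
        exact hinj (congrFun (congrArg FuzzyHom.toFun hk) a)
      have := k.le_mem x
      rw [hkfun] at this
      exact le_antisymm this (f.le_mem x)
  · rintro ⟨hinj, hμ⟩
    intro A' B' e he u v hsq
    have hs : Function.Surjective e.toFun := fuzzy_epi_surjective e he
    have hsq' : ∀ a, f.toFun (u.toFun a) = v.toFun (e.toFun a) := fun a =>
      congrFun (congrArg FuzzyHom.toFun hsq) a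
    let kf : B'.carrier → A.carrier := fun b => u.toFun (hs b).choose
    have hkf : ∀ b, f.toFun (kf b) = v.toFun b := by
      intro b
      rw [hsq' (hs b).choose, (hs b).choose_spec]
    refine ⟨⟨kf, fun b => ?_⟩, FuzzyHom.ext' (funext hkf), fun k' hk' => ?_⟩
    · calc B'.μ b ≤ B.μ (v.toFun b) := v.le_mem b
        _ = B.μ (f.toFun (kf b)) := by rw [hkf]
        _ = A.μ (kf b) := hμ _
    · apply FuzzyHom.ext'
      funext b
      apply hinj
      rw [hkf]
      exact congrFun (congrArg FuzzyHom.toFun hk') b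
end

section
/- Partial deduction lemma: let Λ be a fuzzy theory on a language L, let Γ be a set of formulae, and let Λ[Γ] = Λ ∪ { ∅ ⊢ φ : φ ∈ Γ }. Then (1) if (Γ ∪ Δ ⊢ ψ) ∈ Λ^⊢ then (Δ ⊢ ψ) ∈ (Λ[Γ])^⊢; and (2) if Δ ⊢ ψ is derivable from Λ[Γ] without using the substitution rule Sub, then (Γ ∪ Δ ⊢ ψ) ∈ Λ^⊢. -/
universe u

/-- A signature: operation symbols with positive arities, and constant symbols. -/
structure Signature : Type (u + 1) where
  Op : Type u
  ar : Op → ℕ+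
  Const : Type u

/-- Terms of the language `(S, X)`: inductively built from variables, constants and
operation applications. -/
inductive Term (S : Signature.{u}) (X : Type u) : Type u
  | var : X → Term S X
  | const : S.Const → Term S X
  | op (f : S.Op) : (Fin (S.ar f : ℕ) → Term S X) → Term S X

/-- Formulae: equations `s ≡ t` and membership propositions `∃_l t`. -/
inductive Formula (H : Type u) (S : Signature.{u}) (X : Type u) : Type u
  | eq : Term S X → Term S X → Formula H S X
  | mem : H → Term S X → Formula H S X

/-- A sequent `Γ ⊢ φ`. -/
abbrev Sequent (H : Type u) (S : Signature.{u}) (X : Type u) : Type u :=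
  Set (Formula H S X) × Formula H S X

/-- A fuzzy theory: a set of sequents. -/
abbrev Theory (H : Type u) (S : Signature.{u}) (X : Type u) : Type u :=
  Set (Sequent H S X)

/-- Substitution of terms for variables in a term. -/
def Term.subst {S : Signature.{u}} {X : Type u} (σ : X → Term S X) :
    Term S X → Term S X
  | .var x => σ x
  | .const c => .const c
  | .op f ts => .op f fun i => (ts i).subst σ

/-- Substitution of terms for variables in a formula. -/
def Formula.subst {H : Type u} {S : Signature.{u}} {X : Type u} (σ : X → Term S X) :
    Formula H S X → Formula H S X
  | .eq s t => .eq (s.subst σ) (t.subst σ)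
  | .mem l t => .mem l (t.subst σ)

/-- The fuzzy sequent calculus, parametrized by a flag `allowSub` indicating whether
the substitution rule `Sub` may be used.  `Deriv Λ true Γ φ` means that `Γ ⊢ φ`
belongs to the deductive closure `Λ^⊢`, while `Deriv Λ false Γ φ` means that `Γ ⊢ φ`
is derivable from `Λ` without using the rule `Sub`. -/
inductive Deriv {H : Type u} [Order.Frame H] {S : Signature.{u}} {X : Type u}
    (Λ : Theory H S X) (allowSub : Bool) :
    Set (Formula H S X) → Formula H S X → Prop
  | ax {Γ φ} : (Γ, φ) ∈ Λ → Deriv Λ allowSub Γ φ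
  | assum {Γ φ} : φ ∈ Γ → Deriv Λ allowSub Γ φ
  | weak {Γ Δ φ} : Deriv Λ allowSub Γ φ → Deriv Λ allowSub (Γ ∪ Δ) φ
  | cut {Γ Φ ψ} : (∀ φ ∈ Φ, Deriv Λ allowSub Γ φ) → Deriv Λ allowSub Φ ψ →
      Deriv Λ allowSub Γ ψ
  | refl {Γ t} : Deriv Λ allowSub Γ (.eq t t)
  | symm {Γ s t} : Deriv Λ allowSub Γ (.eq s t) → Deriv Λ allowSub Γ (.eq t s)
  | trans {Γ s t u} : Deriv Λ allowSub Γ (.eq s t) → Deriv Λ allowSub Γ (.eq t u) →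
      Deriv Λ allowSub Γ (.eq s u)
  | sub {Γ φ} (σ : X → Term S X) : allowSub = true →
      Deriv Λ allowSub Γ φ → Deriv Λ allowSub (Formula.subst σ '' Γ) (φ.subst σ)
  | cong {Γ} (f : S.Op) (ts ss : Fin (S.ar f : ℕ) → Term S X) :
      (∀ i, Deriv Λ allowSub Γ (.eq (ts i) (ss i))) →
      Deriv Λ allowSub Γ (.eq (.op f ts) (.op f ss))
  | inf {Γ t} : Deriv Λ allowSub Γ (.mem ⊥ t)
  | mon {Γ l t} (l' : H) : Deriv Λ allowSub Γ (.mem l t) →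
      Deriv Λ allowSub Γ (.mem (l ⊓ l') t)
  | exp {Γ} (f : S.Op) (ts : Fin (S.ar f : ℕ) → Term S X) (ls : Fin (S.ar f : ℕ) → H) :
      (∀ i, Deriv Λ allowSub Γ (.mem (ls i) (ts i))) →
      Deriv Λ allowSub Γ (.mem (⨅ i, ls i) (.op f ts))
  | sup {Γ t} (L : Set H) :
      (∀ l ∈ L, Deriv Λ allowSub Γ (.mem l t)) → Deriv Λ allowSub Γ (.mem (sSup L) t)
  | fn {Γ l t s} : Deriv Λ allowSub Γ (.eq t s) → Deriv Λ allowSub Γ (.mem l t) →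
      Deriv Λ allowSub Γ (.mem l s)

/-- The theory `Λ[Γ]`: `Λ` extended with the axioms `∅ ⊢ φ` for each `φ ∈ Γ`. -/
def extendTheory {H : Type u} [Order.Frame H] {S : Signature.{u}} {X : Type u}
    (Λ : Theory H S X) (Γ : Set (Formula H S X)) : Theory H S X :=
  Λ ∪ { p | p.1 = (∅ : Set (Formula H S X)) ∧ p.2 ∈ Γ }


/-!
Part (1) cuts the premises `Γ` against the new axioms `∅ ⊢ φ` of `Λ[Γ]`. Part (2) is an
induction on the derivation, adding `Γ` to every context: each rule other than `Sub`
is stable under enlarging the context, and an axiom `∅ ⊢ φ` with `φ ∈ Γ` becomes an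
assumption. `Sub` is excluded because it would also substitute into `Γ`.
-/

namespace Deriv

variable {H : Type u} [Order.Frame H] {S : Signature.{u}} {X : Type u}
  {Λ Λ' : Theory H S X} {b : Bool} {Γ Δ : Set (Formula H S X)} {φ ψ : Formula H S X}

theorem mono_theory (hΛ : Λ ⊆ Λ') (h : Deriv Λ b Γ φ) : Deriv Λ' b Γ φ := by
  induction h with
  | ax h => exact .ax (hΛ h)
  | assum h => exact .assum h
  | weak _ ih => exact .weak ih
  | cut _ _ ih₁ ih₂ => exact .cut ih₁ ih₂
  | refl => exact .refl
  | symm _ ih => exact .symm ih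
  | trans _ _ ih₁ ih₂ => exact .trans ih₁ ih₂
  | sub σ hb _ ih => exact .sub σ hb ih
  | cong f ts ss _ ih => exact .cong f ts ss ih
  | inf => exact .inf
  | mon l' _ ih => exact .mon l' ih
  | exp f ts ls _ ih => exact .exp f ts ls ih
  | sup L _ ih => exact .sup L ih
  | fn _ _ ih₁ ih₂ => exact .fn ih₁ ih₂

theorem mono_context (hΓ : Γ ⊆ Δ) (h : Deriv Λ b Γ φ) : Deriv Λ b Δ φ :=
  Set.union_eq_self_of_subset_left hΓ ▸ h.weak

theorem extendTheory_of_mem (hφ : φ ∈ Γ) : Deriv (extendTheory Λ Γ) b Δ φ :=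
  mono_context (Set.empty_subset Δ) (.ax (Or.inr ⟨rfl, hφ⟩))

theorem extendTheory_of_union (h : Deriv Λ b (Γ ∪ Δ) ψ) :
    Deriv (extendTheory Λ Γ) b Δ ψ := by
  refine .cut (Φ := Γ ∪ Δ) ?_ (h.mono_theory Set.subset_union_left)
  rintro φ (hφ | hφ)
  · exact extendTheory_of_mem hφ
  · exact .assum hφ

theorem union_of_extendTheory (h : Deriv (extendTheory Λ Γ) false Δ ψ) :
    Deriv Λ b (Γ ∪ Δ) ψ := by
  induction h with
  | ax h =>
    rcases h with h | ⟨-, hφ⟩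
    · exact mono_context Set.subset_union_right (.ax h)
    · exact .assum (Or.inl hφ)
  | assum h => exact .assum (Or.inr h)
  | weak _ ih => exact Set.union_assoc .. ▸ ih.weak
  | @cut Δ Φ ψ _ _ ih₁ ih₂ =>
    refine .cut (Φ := Γ ∪ Φ) ?_ ih₂
    rintro φ (hφ | hφ)
    · exact .assum (Or.inl hφ)
    · exact ih₁ φ hφ
  | refl => exact .refl
  | symm _ ih => exact .symm ih
  | trans _ _ ih₁ ih₂ => exact .trans ih₁ ih₂
  | sub σ hb => exact Bool.false_ne_true hb |>.elim
  | cong f ts ss _ ih => exact .cong f ts ss ih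
  | inf => exact .inf
  | mon l' _ ih => exact .mon l' ih
  | exp f ts ls _ ih => exact .exp f ts ls ih
  | sup L _ ih => exact .sup L ih
  | fn _ _ ih₁ ih₂ => exact .fn ih₁ ih₂

end Deriv

/-- Partial deduction lemma: (1) if `Γ ∪ Δ ⊢ ψ` is in `Λ^⊢` then `Δ ⊢ ψ` is in
`(Λ[Γ])^⊢`; (2) if `Δ ⊢ ψ` is derivable from `Λ[Γ]` without using the rule `Sub`,
then `Γ ∪ Δ ⊢ ψ` is in `Λ^⊢`. -/
theorem partial_deduction_lemma {H : Type u} [Order.Frame H] {S : Signature.{u}}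
    {X : Type u} (Λ : Theory H S X) (Γ : Set (Formula H S X)) :
    (∀ (Δ : Set (Formula H S X)) (ψ : Formula H S X),
        Deriv Λ true (Γ ∪ Δ) ψ → Deriv (extendTheory Λ Γ) true Δ ψ) ∧
    (∀ (Δ : Set (Formula H S X)) (ψ : Formula H S X),
        Deriv (extendTheory Λ Γ) false Δ ψ → Deriv Λ true (Γ ∪ Δ) ψ) :=
  ⟨fun _ _ => Deriv.extendTheory_of_union, fun _ _ => Deriv.union_of_extendTheory⟩
end
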